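/- Let ℓ_2 be a graded antisymmetric chain map of weight 0 on V vanishing on V_1 × V_1, with associated bracket [−,−] on G(V). Then the assignment ℓ_3 ↦ J, J_{xyz} = ([[x,y],z], ℓ_3(x,y,z)), is a bijection between: (a) antisymmetric trilinear maps ℓ_3 : V_0^3 → V_1 satisfying, for all x,y,z ∈ V_0, f ∈ V_1, a ∈ V_2, (i) d(ℓ_3(x,y,z)) + ℓ_2(ℓ_2(x,y),z) − ℓ_2(ℓ_2(x,z),y) + ℓ_2(ℓ_2(y,z),x) = 0, (ii) ℓ_2(ℓ_2(x,y),f) − ℓ_2(ℓ_2(x,f),y) + ℓ_2(ℓ_2(y,f),x) + ℓ_3(d f, x, y) = 0, and (iii) ℓ_2(ℓ_2(x,y),a) − ℓ_2(ℓ_2(x,a),y) + ℓ_2(ℓ_2(y,a),x) = 0 (these express the L-infinity condition n = 3 for the weight-1 graded antisymmetric extension of ℓ_3 by zero in total degree ≥ 1); and (b) skew-symmetric trilinear natural 2-transformations J : [[−,−],•] ⇒ [[−,•],−] + [−,[−,•]] (Jacobiators). -/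

import Mathlib

/-!
By `src`, a Jacobiator is determined by its `V₁`-component `ℓ₃`, and its target condition is
condition (i). Brackets with identity 2-cells only involve the actions of `V₀` on `V₁` and `V₂`,
so the `V₁`- and `V₂`-components of each naturality square say that the Jacobi identity of these
actions fails by `ℓ₃(d f, -, -)` and holds exactly: after the antisymmetry of `ℓ₂` and `ℓ₃`, these
are conditions (ii) and (iii) for the two arguments other than the natural one.
-/

/- The linear 2-category G(V) associated with a 3-term chain complex
   V₂ --d₂--> V₁ --d₁--> V₀ (d₁ ∘ d₂ = 0):
   L₀ = V₀, L₁ = V₀ × V₁, L₂ = V₀ × V₁ × V₂,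
   s(v₀,…,v_m) = (v₀,…,v_{m-1}), t(v₀,…,v_m) = (v₀,…,v_{m-1} + d v_m),
   1_{(v₀,…,v_m)} = (v₀,…,v_m,0),
   (v₀,…,v_m) ∘_p (w₀,…,w_m) = (v₀,…,v_p, v_{p+1}+w_{p+1}, …, v_m+w_m). -/

namespace GV

variable {K : Type} [Field K] {V0 V1 V2 : Type}
  [AddCommGroup V0] [AddCommGroup V1] [AddCommGroup V2]
  [Module K V0] [Module K V1] [Module K V2]

variable (d1 : V1 →ₗ[K] V0) (d2 : V2 →ₗ[K] V1)

/-- Source of a 1-cell. -/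
def s1 (v : V0 × V1) : V0 := v.1

/-- Target of a 1-cell. -/
def t1 (v : V0 × V1) : V0 := v.1 + d1 v.2

/-- Source of a 2-cell. -/
def s2 (v : V0 × V1 × V2) : V0 × V1 := (v.1, v.2.1)

/-- Target of a 2-cell. -/
def t2 (v : V0 × V1 × V2) : V0 × V1 := (v.1, v.2.1 + d2 v.2.2)

/-- Identity 1-cell on a 0-cell. -/
def one0 (x : V0) : V0 × V1 := (x, 0)

/-- Identity 2-cell on a 1-cell. -/
def one1 (v : V0 × V1) : V0 × V1 × V2 := (v.1, v.2, 0)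

/-- Composition of 1-cells along a 0-cell. -/
def comp01 (v w : V0 × V1) : V0 × V1 := (v.1, v.2 + w.2)

/-- Composition of 2-cells along a 0-cell. -/
def comp02 (v w : V0 × V1 × V2) : V0 × V1 × V2 := (v.1, v.2.1 + w.2.1, v.2.2 + w.2.2)

/-- Composition of 2-cells along a 1-cell. -/
def comp12 (v w : V0 × V1 × V2) : V0 × V1 × V2 := (v.1, v.2.1, v.2.2 + w.2.2)

/-- Composability of 1-cells along a 0-cell: `t v = s w`. -/
def Comp01 (v w : V0 × V1) : Prop := t1 d1 v = s1 w

/-- Composability of 2-cells along a 0-cell: `t² v = s² w`. -/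
def Comp02 (v w : V0 × V1 × V2) : Prop := t1 d1 (t2 d2 v) = s1 (s2 w)

/-- Composability of 2-cells along a 1-cell: `t v = s w`. -/
def Comp12 (v w : V0 × V1 × V2) : Prop := t2 d2 v = s2 w


/-- A graded antisymmetric chain map `ℓ₂` of weight 0 on `V = (V₀,V₁,V₂)` which
vanishes on `V₁ × V₁`. -/
structure Ell2 (K : Type) [Field K] (V0 V1 V2 : Type)
    [AddCommGroup V0] [AddCommGroup V1] [AddCommGroup V2]
    [Module K V0] [Module K V1] [Module K V2]
    (d1 : V1 →ₗ[K] V0) (d2 : V2 →ₗ[K] V1) : Type where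
  l00 : V0 → V0 → V0
  l01 : V0 → V1 → V1
  l10 : V1 → V0 → V1
  l02 : V0 → V2 → V2
  l20 : V2 → V0 → V2
  l11 : V1 → V1 → V2
  bil00 : (∀ x, IsLinearMap K (l00 x)) ∧ (∀ y, IsLinearMap K (fun x => l00 x y))
  bil01 : (∀ x, IsLinearMap K (l01 x)) ∧ (∀ g, IsLinearMap K (fun x => l01 x g))
  bil10 : (∀ f, IsLinearMap K (l10 f)) ∧ (∀ y, IsLinearMap K (fun f => l10 f y))
  bil02 : (∀ x, IsLinearMap K (l02 x)) ∧ (∀ b, IsLinearMap K (fun x => l02 x b))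
  bil20 : (∀ a, IsLinearMap K (l20 a)) ∧ (∀ y, IsLinearMap K (fun a => l20 a y))
  bil11 : (∀ f, IsLinearMap K (l11 f)) ∧ (∀ g, IsLinearMap K (fun f => l11 f g))
  anti00 : ∀ x y, l00 x y = -l00 y x
  anti10 : ∀ f y, l10 f y = -l01 y f
  anti20 : ∀ a y, l20 a y = -l02 y a
  anti11 : ∀ f g, l11 f g = l11 g f
  chain01 : ∀ x g, d1 (l01 x g) = l00 x (d1 g)
  chain10 : ∀ f y, d1 (l10 f y) = l00 (d1 f) y
  chain02 : ∀ x b, d2 (l02 x b) = l01 x (d2 b)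
  chain20 : ∀ a y, d2 (l20 a y) = l10 (d2 a) y
  chain11 : ∀ f g, d2 (l11 f g) = l01 (d1 f) g - l10 f (d1 g)
  chain12 : ∀ f b, (0 : V2) = l02 (d1 f) b - l11 f (d2 b)
  vanish11 : ∀ f g, l11 f g = 0


variable {d1} {d2} in
/-- The bracket of 1-cells associated with `ℓ₂`:
`[(x,f),(y,g)] = (ℓ₂(x,y), ℓ₂(x,g) + ℓ₂(f, y + d g))`. -/
def br1 (E : Ell2 K V0 V1 V2 d1 d2) (v w : V0 × V1) : V0 × V1 :=
  (E.l00 v.1 w.1, E.l01 v.1 w.2 + E.l10 v.2 (w.1 + d1 w.2))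

variable {d1} {d2} in
/-- The bracket of 2-cells associated with `ℓ₂`:
`[(x,f,a),(y,g,b)] = (ℓ₂(x,y), ℓ₂(x,g) + ℓ₂(f, y + d g), ℓ₂(x,b) + ℓ₂(a,y))`. -/
def br2 (E : Ell2 K V0 V1 V2 d1 d2) (v w : V0 × V1 × V2) : V0 × V1 × V2 :=
  (E.l00 v.1 w.1, E.l01 v.1 w.2.1 + E.l10 v.2.1 (w.1 + d1 w.2.1),
    E.l02 v.1 w.2.2 + E.l20 v.2.2 w.1)

end GV

namespace GV

variable {K : Type} [Field K] {V0 V1 V2 : Type}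
  [AddCommGroup V0] [AddCommGroup V1] [AddCommGroup V2]
  [Module K V0] [Module K V1] [Module K V2]
  {d1 : V1 →ₗ[K] V0} {d2 : V2 →ₗ[K] V1}

/-- An antisymmetric trilinear map `ℓ₃ : V₀³ → V₁` satisfying the L∞ condition `n = 3`
(for its weight-1 graded antisymmetric extension by zero in total degree ≥ 1). -/
structure Ell3 (E : Ell2 K V0 V1 V2 d1 d2) : Type where
  l3 : V0 → V0 → V0 → V1
  tri : (∀ x y, IsLinearMap K (l3 x y)) ∧
    (∀ x z, IsLinearMap K (fun y => l3 x y z)) ∧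
    (∀ y z, IsLinearMap K (fun x => l3 x y z))
  anti12 : ∀ x y z, l3 x y z = -l3 y x z
  anti23 : ∀ x y z, l3 x y z = -l3 x z y
  cond1 : ∀ x y z, d1 (l3 x y z) + E.l00 (E.l00 x y) z - E.l00 (E.l00 x z) y +
      E.l00 (E.l00 y z) x = 0
  cond2 : ∀ x y f, E.l01 (E.l00 x y) f - E.l10 (E.l01 x f) y + E.l10 (E.l01 y f) x +
      l3 (d1 f) x y = 0
  cond3 : ∀ x y a, E.l02 (E.l00 x y) a - E.l20 (E.l02 x a) y + E.l20 (E.l02 y a) x = 0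

/-- A Jacobiator: a skew-symmetric trilinear natural 2-transformation
`[[−,−],•] ⇒ [[−,•],−] + [−,[−,•]]`. -/
structure Jacobiator (E : Ell2 K V0 V1 V2 d1 d2) : Type where
  J : V0 → V0 → V0 → V0 × V1
  tri : (∀ x y, IsLinearMap K (J x y)) ∧
    (∀ x z, IsLinearMap K (fun y => J x y z)) ∧
    (∀ y z, IsLinearMap K (fun x => J x y z))
  src : ∀ x y z, (J x y z).1 = E.l00 (E.l00 x y) z
  tgt : ∀ x y z, t1 d1 (J x y z) = E.l00 (E.l00 x z) y + E.l00 x (E.l00 y z)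
  anti12 : ∀ x y z, (J x y z).2 = -(J y x z).2
  anti23 : ∀ x y z, (J x y z).2 = -(J x z y).2
  nat3 : ∀ (x y z : V0) (f : V1) (a : V2),
      comp02 (br2 E (br2 E (x, 0, 0) (y, 0, 0)) (z, f, a))
          (one1 (J x y (t1 d1 (t2 d2 (z, f, a))))) =
        comp02 (one1 (J x y z))
          (br2 E (br2 E (x, 0, 0) (z, f, a)) (y, 0, 0) +
            br2 E (x, 0, 0) (br2 E (y, 0, 0) (z, f, a)))
  nat1 : ∀ (x y z : V0) (f : V1) (a : V2),
      comp02 (br2 E (br2 E (x, f, a) (y, 0, 0)) (z, 0, 0))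
          (one1 (J (t1 d1 (t2 d2 (x, f, a))) y z)) =
        comp02 (one1 (J x y z))
          (br2 E (br2 E (x, f, a) (z, 0, 0)) (y, 0, 0) +
            br2 E (x, f, a) (br2 E (y, 0, 0) (z, 0, 0)))
  nat2 : ∀ (x y z : V0) (f : V1) (a : V2),
      comp02 (br2 E (br2 E (x, 0, 0) (y, f, a)) (z, 0, 0))
          (one1 (J x (t1 d1 (t2 d2 (y, f, a))) z)) =
        comp02 (one1 (J x y z))
          (br2 E (br2 E (x, 0, 0) (z, 0, 0)) (y, f, a) +
            br2 E (x, 0, 0) (br2 E (y, f, a) (z, 0, 0)))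

end GV

namespace IsLinearMap

variable {R M N P : Type*} [Semiring R] [AddCommMonoid M] [AddCommMonoid N] [AddCommMonoid P]
  [Module R M] [Module R N] [Module R P]

theorem prodMk {f : M → N} {g : M → P} (hf : IsLinearMap R f) (hg : IsLinearMap R g) :
    IsLinearMap R fun x => (f x, g x) :=
  ((mk' f hf).prod (mk' g hg)).isLinear

theorem comp {f : M → N} {g : N → P} (hg : IsLinearMap R g) (hf : IsLinearMap R f) :
    IsLinearMap R fun x => g (f x) :=
  ((mk' g hg).comp (mk' f hf)).isLinear

theorem snd {f : M → N × P} (hf : IsLinearMap R f) : IsLinearMap R fun x => (f x).2 :=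
  ((LinearMap.snd R N P).comp (mk' f hf)).isLinear

end IsLinearMap

theorem eq_iff_eq_zero_of_sub_eq {G : Type*} [AddGroup G] {a b c : G} (h : a - b = c) :
    a = b ↔ c = 0 := by
  rw [← h, sub_eq_zero]

theorem eq_rotate_of_antisymm {α β : Type*} [InvolutiveNeg β] {L : α → α → α → β}
    (h12 : ∀ x y z, L x y z = -L y x z) (h23 : ∀ x y z, L x y z = -L x z y) (x y z : α) :
    L x y z = L z x y := by
  rw [h12 z x y, h23 x z y, neg_neg]

namespace GV

variable {K : Type} [Field K] {V0 V1 V2 : Type}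
  [AddCommGroup V0] [AddCommGroup V1] [AddCommGroup V2]
  [Module K V0] [Module K V1] [Module K V2]
  {d1 : V1 →ₗ[K] V0} {d2 : V2 →ₗ[K] V1}

namespace Ell2

variable (E : Ell2 K V0 V1 V2 d1 d2)

@[simp] theorem l01_zero (x : V0) : E.l01 x 0 = 0 := (E.bil01.1 x).map_zero
@[simp] theorem l02_zero (x : V0) : E.l02 x 0 = 0 := (E.bil02.1 x).map_zero
@[simp] theorem l01_neg (x : V0) (f : V1) : E.l01 x (-f) = -E.l01 x f := (E.bil01.1 x).map_neg f
@[simp] theorem l02_neg (x : V0) (a : V2) : E.l02 x (-a) = -E.l02 x a := (E.bil02.1 x).map_neg a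

def jacobiV1 (x y : V0) (f : V1) : V1 :=
  E.l01 (E.l00 x y) f - E.l01 x (E.l01 y f) + E.l01 y (E.l01 x f)

def jacobiV2 (x y : V0) (a : V2) : V2 :=
  E.l02 (E.l00 x y) a - E.l02 x (E.l02 y a) + E.l02 y (E.l02 x a)

theorem jacobiV1_eq (x y : V0) (f : V1) :
    E.l01 (E.l00 x y) f - E.l10 (E.l01 x f) y + E.l10 (E.l01 y f) x = E.jacobiV1 x y f := by
  rw [E.anti10, E.anti10, jacobiV1]
  abel

theorem jacobiV2_eq (x y : V0) (a : V2) :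
    E.l02 (E.l00 x y) a - E.l20 (E.l02 x a) y + E.l20 (E.l02 y a) x = E.jacobiV2 x y a := by
  rw [E.anti20, E.anti20, jacobiV2]
  abel

theorem br2_one_left (x y : V0) (f : V1) (a : V2) :
    br2 E (x, 0, 0) (y, f, a) = (E.l00 x y, E.l01 x f, E.l02 x a) := by
  simp [br2, (E.bil10.2 _).map_zero, (E.bil20.2 _).map_zero]

theorem br2_one_right (x y : V0) (f : V1) (a : V2) :
    br2 E (x, f, a) (y, 0, 0) = (E.l00 x y, -E.l01 y f, -E.l02 y a) := by
  simp [br2, E.anti10, E.anti20]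

end Ell2

variable (E : Ell2 K V0 V1 V2 d1 d2)

def jacOf (L : V0 → V0 → V0 → V1) (x y z : V0) : V0 × V1 := (E.l00 (E.l00 x y) z, L x y z)

variable {E}

theorem t1_jacOf_eq_iff (L : V0 → V0 → V0 → V1) (x y z : V0) :
    t1 d1 (jacOf E L x y z) = E.l00 (E.l00 x z) y + E.l00 x (E.l00 y z) ↔
      d1 (L x y z) + E.l00 (E.l00 x y) z - E.l00 (E.l00 x z) y + E.l00 (E.l00 y z) x = 0 := by
  refine eq_iff_eq_zero_of_sub_eq ?_
  rw [t1, jacOf, E.anti00 x (E.l00 y z)]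
  abel

theorem jacOf_nat3_iff (hdd : ∀ a, d1 (d2 a) = 0) {L : V0 → V0 → V0 → V1}
    (hL : ∀ x y, IsLinearMap K (L x y))
    (hcyc : ∀ x y z, L x y z = L z x y) (x y z : V0) (f : V1) (a : V2) :
    comp02 (br2 E (br2 E (x, 0, 0) (y, 0, 0)) (z, f, a))
          (one1 (jacOf E L x y (t1 d1 (t2 d2 (z, f, a))))) =
        comp02 (one1 (jacOf E L x y z))
          (br2 E (br2 E (x, 0, 0) (z, f, a)) (y, 0, 0) +
            br2 E (x, 0, 0) (br2 E (y, 0, 0) (z, f, a))) ↔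
      E.jacobiV1 x y f + L (d1 f) x y = 0 ∧ E.jacobiV2 x y a = 0 := by
  simp only [Ell2.br2_one_left, Ell2.br2_one_right, Ell2.l01_zero, Ell2.l02_zero, jacOf, t1, t2,
    comp02, one1, map_add, hdd, neg_zero, add_zero, (hL x y).map_add, Prod.mk_add_mk, Prod.mk.injEq,
    true_and]
  refine and_congr (eq_iff_eq_zero_of_sub_eq ?_) (eq_iff_eq_zero_of_sub_eq ?_)
  · rw [Ell2.jacobiV1, hcyc x y (d1 f)]; abel
  · rw [Ell2.jacobiV2]; abel

theorem jacOf_nat1_iff (hdd : ∀ a, d1 (d2 a) = 0) {L : V0 → V0 → V0 → V1}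
    (hL : ∀ y z, IsLinearMap K fun x => L x y z) (x y z : V0) (f : V1)
    (a : V2) :
    comp02 (br2 E (br2 E (x, f, a) (y, 0, 0)) (z, 0, 0))
          (one1 (jacOf E L (t1 d1 (t2 d2 (x, f, a))) y z)) =
        comp02 (one1 (jacOf E L x y z))
          (br2 E (br2 E (x, f, a) (z, 0, 0)) (y, 0, 0) +
            br2 E (x, f, a) (br2 E (y, 0, 0) (z, 0, 0))) ↔
      E.jacobiV1 y z f + L (d1 f) y z = 0 ∧ E.jacobiV2 y z a = 0 := by
  simp only [Ell2.br2_one_right, Ell2.l01_zero, Ell2.l02_zero, Ell2.l01_neg,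
    Ell2.l02_neg, jacOf, t1, t2, comp02, one1, map_add, hdd, neg_zero, neg_neg, add_zero,
    (hL y z).map_add, Prod.mk_add_mk, Prod.mk.injEq, true_and]
  refine and_congr (eq_iff_eq_zero_of_sub_eq ?_) (eq_iff_eq_zero_of_sub_eq ?_)
  · rw [Ell2.jacobiV1]; abel
  · rw [Ell2.jacobiV2]; abel

theorem jacOf_nat2_iff (hdd : ∀ a, d1 (d2 a) = 0) {L : V0 → V0 → V0 → V1}
    (hL : ∀ x z, IsLinearMap K fun y => L x y z)
    (hanti : ∀ x y z, L x y z = -L y x z) (x y z : V0) (f : V1) (a : V2) :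
    comp02 (br2 E (br2 E (x, 0, 0) (y, f, a)) (z, 0, 0))
          (one1 (jacOf E L x (t1 d1 (t2 d2 (y, f, a))) z)) =
        comp02 (one1 (jacOf E L x y z))
          (br2 E (br2 E (x, 0, 0) (z, 0, 0)) (y, f, a) +
            br2 E (x, 0, 0) (br2 E (y, f, a) (z, 0, 0))) ↔
      E.jacobiV1 x z f + L (d1 f) x z = 0 ∧ E.jacobiV2 x z a = 0 := by
  simp only [Ell2.br2_one_left, Ell2.br2_one_right, Ell2.l01_zero, Ell2.l02_zero, Ell2.l01_neg,
    Ell2.l02_neg, jacOf, t1, t2, comp02, one1, map_add, hdd, neg_zero, add_zero,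
    (hL x z).map_add, Prod.mk_add_mk, Prod.mk.injEq, true_and]
  refine and_congr (eq_comm.trans (eq_iff_eq_zero_of_sub_eq ?_))
    (eq_comm.trans (eq_iff_eq_zero_of_sub_eq ?_))
  · rw [Ell2.jacobiV1, hanti x (d1 f) z]; abel
  · rw [Ell2.jacobiV2]; abel

namespace Ell3

variable (T : Ell3 E)

theorem jacobiV1_add_l3 (x y : V0) (f : V1) : E.jacobiV1 x y f + T.l3 (d1 f) x y = 0 := by
  rw [← E.jacobiV1_eq]
  exact T.cond2 x y f

theorem jacobiV2_eq_zero (T : Ell3 E) (x y : V0) (a : V2) : E.jacobiV2 x y a = 0 := by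
  rw [← E.jacobiV2_eq]
  exact T.cond3 x y a

def toJacobiator (hdd : ∀ a, d1 (d2 a) = 0) : Jacobiator E where
  J := jacOf E T.l3
  tri := ⟨fun x y => (E.bil00.1 _).prodMk (T.tri.1 x y),
    fun x z => ((E.bil00.2 z).comp (E.bil00.1 x)).prodMk (T.tri.2.1 x z),
    fun y z => ((E.bil00.2 z).comp (E.bil00.2 y)).prodMk (T.tri.2.2 y z)⟩
  src _ _ _ := rfl
  tgt x y z := (t1_jacOf_eq_iff T.l3 x y z).2 (T.cond1 x y z)
  anti12 := T.anti12
  anti23 := T.anti23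
  nat3 x y z f a := (jacOf_nat3_iff hdd T.tri.1 (eq_rotate_of_antisymm T.anti12 T.anti23)
    x y z f a).2 ⟨T.jacobiV1_add_l3 x y f, T.jacobiV2_eq_zero x y a⟩
  nat1 x y z f a := (jacOf_nat1_iff hdd T.tri.2.2 x y z f a).2
    ⟨T.jacobiV1_add_l3 y z f, T.jacobiV2_eq_zero y z a⟩
  nat2 x y z f a := (jacOf_nat2_iff hdd T.tri.2.1 T.anti12 x y z f a).2
    ⟨T.jacobiV1_add_l3 x z f, T.jacobiV2_eq_zero x z a⟩

end Ell3

namespace Jacobiator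

theorem ext {A B : Jacobiator E} (h : A.J = B.J) : A = B := by
  cases A; cases B; cases h; rfl

variable (Jc : Jacobiator E)

def l3 (x y z : V0) : V1 := (Jc.J x y z).2

theorem J_eq_jacOf : Jc.J = jacOf E Jc.l3 :=
  funext₃ fun x y z => Prod.ext (Jc.src x y z) rfl

def toEll3 (hdd : ∀ a, d1 (d2 a) = 0) : Ell3 E where
  l3 := Jc.l3
  tri := ⟨fun x y => (Jc.tri.1 x y).snd, fun x z => (Jc.tri.2.1 x z).snd,
    fun y z => (Jc.tri.2.2 y z).snd⟩
  anti12 := Jc.anti12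
  anti23 := Jc.anti23
  cond1 x y z := (t1_jacOf_eq_iff Jc.l3 x y z).1 (Jc.J_eq_jacOf ▸ Jc.tgt x y z)
  cond2 x y f := by
    have hnat := Jc.J_eq_jacOf ▸ Jc.nat3 x y 0 f 0
    rw [jacOf_nat3_iff hdd (L := Jc.l3) (fun x y => (Jc.tri.1 x y).snd)
      (eq_rotate_of_antisymm Jc.anti12 Jc.anti23), ← E.jacobiV1_eq] at hnat
    exact hnat.1
  cond3 x y a := by
    have hnat := Jc.J_eq_jacOf ▸ Jc.nat3 x y 0 0 a
    rw [jacOf_nat3_iff hdd (L := Jc.l3) (fun x y => (Jc.tri.1 x y).snd)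
      (eq_rotate_of_antisymm Jc.anti12 Jc.anti23), ← E.jacobiV2_eq] at hnat
    exact hnat.2

end Jacobiator

end GV

open GV

/-- The assignment `ℓ₃ ↦ J`, `J_{xyz} = ([[x,y],z], ℓ₃(x,y,z))`, is a
bijection between antisymmetric trilinear maps `ℓ₃ : V₀³ → V₁` satisfying the L∞
condition `n = 3` (with vanishing in total degree ≥ 1) and skew-symmetric trilinear
natural 2-transformations `J : [[−,−],•] ⇒ [[−,•],−] + [−,[−,•]]` (Jacobiators). -/
theorem jacobiator_ell3_correspondence (K : Type) [Field K]
    (V0 V1 V2 : Type) [AddCommGroup V0] [AddCommGroup V1] [AddCommGroup V2]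
    [Module K V0] [Module K V1] [Module K V2]
    (d1 : V1 →ₗ[K] V0) (d2 : V2 →ₗ[K] V1) (hdd : ∀ a, d1 (d2 a) = 0)
    (E : Ell2 K V0 V1 V2 d1 d2) :
    ∃ Φ : Ell3 E ≃ Jacobiator E,
      ∀ (T : Ell3 E) (x y z : V0),
        (Φ T).J x y z = (E.l00 (E.l00 x y) z, T.l3 x y z) :=
  ⟨{ toFun := fun T => T.toJacobiator hdd
     invFun := fun Jc => Jc.toEll3 hdd
     left_inv := fun _ => rfl
     right_inv := fun Jc => Jacobiator.ext Jc.J_eq_jacOf.symm },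
    fun _ _ _ _ => rfl⟩
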